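/- arXiv:2412.13316 — 15 statements merged into one kernel-verified Lean document; each statement's English description precedes it below -/
import Mathlib

section
/- Let A be an additive abelian group and let γ₁, γ₂ be endogenies of A. Then the relational composition γ₁ ∘ γ₂ := {(a, c) : ∃ b, b ∈ γ₂[a] and c ∈ γ₁[b]} is again an endogeny of A, and its katakernel satisfies kat(γ₁ ∘ γ₂) = γ₁[kat γ₂]. -/
open Pointwise

variable {A : Type*} [AddCommGroup A]

/-- The fibre `γ[a]` of a relation `γ ⊆ A × A` over `a`. -/
def fib (γ : Set (A × A)) (a : A) : Set A := {b | (a, b) ∈ γ}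

/-- The image `γ[S]` of a set `S ⊆ A` under a relation `γ ⊆ A × A`. -/
def eimg (γ : Set (A × A)) (S : Set A) : Set A := {b | ∃ a ∈ S, (a, b) ∈ γ}

/-- The katakernel `kat γ = γ[0]`. -/
def kat (γ : Set (A × A)) : Set A := {b | ((0 : A), b) ∈ γ}

/-- The image `im γ = γ[A]`. -/
def eim (γ : Set (A × A)) : Set A := {b | ∃ a, (a, b) ∈ γ}

/-- `γ` is (the carrier of) an additive subgroup of `A × A`. -/
def IsAddSubgroupSet (γ : Set (A × A)) : Prop :=
  (0 : A × A) ∈ γ ∧ (∀ p ∈ γ, ∀ q ∈ γ, p + q ∈ γ) ∧ (∀ p ∈ γ, -p ∈ γ)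

/-- An endogeny of `A`: an additive subgroup of `A × A` projecting onto `A`
with finite katakernel. -/
def IsEndogeny (γ : Set (A × A)) : Prop :=
  IsAddSubgroupSet γ ∧ (∀ a : A, ∃ b : A, (a, b) ∈ γ) ∧ (kat γ).Finite

/-- Pointwise sum of endogenies. -/
def esum (γ₁ γ₂ : Set (A × A)) : Set (A × A) :=
  {p | ∃ b₁ b₂ : A, (p.1, b₁) ∈ γ₁ ∧ (p.1, b₂) ∈ γ₂ ∧ p.2 = b₁ + b₂}

/-- Pointwise negation of an endogeny. -/
def eneg (γ : Set (A × A)) : Set (A × A) := {p | (p.1, -p.2) ∈ γ}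

/-- Pointwise difference of endogenies. -/
def esub (γ₁ γ₂ : Set (A × A)) : Set (A × A) := esum γ₁ (eneg γ₂)

/-- Composition of endogenies (as relations): `(a, c) ∈ γ₁ ∘ γ₂` iff
`∃ b, b ∈ γ₂[a]` and `c ∈ γ₁[b]`. -/
def ecomp (γ₁ γ₂ : Set (A × A)) : Set (A × A) :=
  {p | ∃ b : A, (p.1, b) ∈ γ₂ ∧ (b, p.2) ∈ γ₁}

/-- Sharp commutation: `im (γ ∘ δ − δ ∘ γ) ⊆ kat γ + kat δ`. -/
def SharpCommute (γ δ : Set (A × A)) : Prop :=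
  eim (esub (ecomp γ δ) (ecomp δ γ)) ⊆ kat γ + kat δ

/-- Equivalence of endogenies: they agree modulo a finite subgroup. -/
def EEquiv (γ₁ γ₂ : Set (A × A)) : Prop :=
  ∃ F : AddSubgroup A, (F : Set A).Finite ∧
    ∀ a : A, fib γ₁ a + (F : Set A) = fib γ₂ a + (F : Set A)

/-- A prering of endogenies: a set of endogenies closed under `+`, `−` and `∘`. -/
def IsPrering (Γ : Set (Set (A × A))) : Prop :=
  (∀ γ ∈ Γ, IsEndogeny γ) ∧ (∀ γ ∈ Γ, ∀ δ ∈ Γ, esum γ δ ∈ Γ) ∧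
  (∀ γ ∈ Γ, eneg γ ∈ Γ) ∧ (∀ γ ∈ Γ, ∀ δ ∈ Γ, ecomp γ δ ∈ Γ)

/-- The katakernel of a prering: the subgroup generated by all the katakernels. -/
def Kat (Γ : Set (Set (A × A))) : AddSubgroup A :=
  AddSubgroup.closure (⋃ γ ∈ Γ, kat γ)

/-- the relational composition of two endogenies is an endogeny,
and `kat (γ₁ ∘ γ₂) = γ₁[kat γ₂]`. -/
theorem ecomp_isEndogeny_and_kat (γ₁ γ₂ : Set (A × A))
    (h₁ : IsEndogeny γ₁) (h₂ : IsEndogeny γ₂) :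
    IsEndogeny (ecomp γ₁ γ₂) ∧ kat (ecomp γ₁ γ₂) = eimg γ₁ (kat γ₂) := by
  obtain ⟨⟨hz₁, hadd₁, hneg₁⟩, hsur₁, hfin₁⟩ := h₁
  obtain ⟨⟨hz₂, hadd₂, hneg₂⟩, hsur₂, hfin₂⟩ := h₂
  have hkat : kat (ecomp γ₁ γ₂) = eimg γ₁ (kat γ₂) := by
    ext c
    constructor
    · rintro ⟨b, hb, hc⟩
      exact ⟨b, hb, hc⟩
    · rintro ⟨b, hb, hc⟩
      exact ⟨b, hb, hc⟩
  have hfib : ∀ b : A, (fib γ₁ b).Finite := by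
    intro b
    obtain ⟨c, hc⟩ := hsur₁ b
    have : fib γ₁ b ⊆ (fun x => c + x) '' kat γ₁ := by
      intro c' hc'
      refine ⟨c' - c, ?_, by simp⟩
      have := hadd₁ _ hc' _ (hneg₁ _ hc)
      simpa [kat, sub_eq_add_neg] using this
    exact Set.Finite.subset (hfin₁.image _) this
  refine ⟨⟨⟨⟨0, hz₂, hz₁⟩, ?_, ?_⟩, ?_, ?_⟩, hkat⟩
  · rintro ⟨a, c⟩ ⟨b, hb, hc⟩ ⟨a', c'⟩ ⟨b', hb', hc'⟩
    exact ⟨b + b', hadd₂ _ hb _ hb', hadd₁ _ hc _ hc'⟩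
  · rintro ⟨a, c⟩ ⟨b, hb, hc⟩
    exact ⟨-b, hneg₂ _ hb, hneg₁ _ hc⟩
  · intro a
    obtain ⟨b, hb⟩ := hsur₂ a
    obtain ⟨c, hc⟩ := hsur₁ b
    exact ⟨c, b, hb, hc⟩
  · rw [show kat (ecomp γ₁ γ₂) = ⋃ b ∈ kat γ₂, fib γ₁ b by
      ext c; simp only [hkat, eimg, Set.mem_iUnion, Set.mem_setOf_eq]
      exact ⟨fun ⟨a, h, h2⟩ => ⟨a, h, h2⟩, fun ⟨a, h, h2⟩ => ⟨a, h, h2⟩⟩]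
    exact hfin₂.biUnion fun b _ => hfib b
end

section
/- Let A be an additive abelian group and let γ, δ₁, δ₂ be endogenies of A. Then right-distributivity holds exactly: γ ∘ (δ₁ + δ₂) = γ ∘ δ₁ + γ ∘ δ₂ (as subgroups of A × A). -/
open Pointwise

variable {A : Type*} [AddCommGroup A]

/-- right-distributivity holds exactly:
`γ ∘ (δ₁ + δ₂) = γ ∘ δ₁ + γ ∘ δ₂`. -/
theorem ecomp_esum_right_distrib (γ δ₁ δ₂ : Set (A × A))
    (hγ : IsEndogeny γ) (hδ₁ : IsEndogeny δ₁) (hδ₂ : IsEndogeny δ₂) :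
    ecomp γ (esum δ₁ δ₂) = esum (ecomp γ δ₁) (ecomp γ δ₂) := by
  obtain ⟨⟨_, hγadd, hγneg⟩, hγsurj, _⟩ := hγ
  ext ⟨a, c⟩
  constructor
  · rintro ⟨b, ⟨b₁, b₂, hb₁, hb₂, rfl⟩, hbc⟩
    obtain ⟨c₁, hc₁⟩ := hγsurj b₁
    refine ⟨c₁, c - c₁, ⟨b₁, hb₁, hc₁⟩, ⟨b₂, hb₂, ?_⟩, by abel⟩
    have := hγadd _ hbc _ (hγneg _ hc₁)
    simpa [Prod.ext_iff, sub_eq_add_neg] using this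
  · rintro ⟨c₁, c₂, ⟨b₁, hb₁, hc₁⟩, ⟨b₂, hb₂, hc₂⟩, rfl⟩
    exact ⟨b₁ + b₂, ⟨b₁, b₂, hb₁, hb₂, rfl⟩, hγadd _ hc₁ _ hc₂⟩
end

section
/- Let A be an additive abelian group and let γ₁, γ₂, δ be endogenies of A. Then for every a ∈ A one has (γ₁ ∘ δ + γ₂ ∘ δ)[a] ⊆ ((γ₁ + γ₂) ∘ δ)[a] + γ₂[kat δ], and likewise (γ₁ ∘ δ + γ₂ ∘ δ)[a] ⊆ ((γ₁ + γ₂) ∘ δ)[a] + γ₁[kat δ] (left-distributivity holds up to the finite error term γᵢ[kat δ]). -/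
open Pointwise

variable {A : Type*} [AddCommGroup A]

/-- left-distributivity holds up to the finite error term
`γᵢ[kat δ]`: for every `a`,
`(γ₁ ∘ δ + γ₂ ∘ δ)[a] ⊆ ((γ₁ + γ₂) ∘ δ)[a] + γ₂[kat δ]` and likewise with
`γ₁[kat δ]`. -/
theorem left_distrib_up_to_kat (γ₁ γ₂ δ : Set (A × A))
    (h₁ : IsEndogeny γ₁) (h₂ : IsEndogeny γ₂) (hδ : IsEndogeny δ) (a : A) :
    fib (esum (ecomp γ₁ δ) (ecomp γ₂ δ)) a ⊆
      fib (ecomp (esum γ₁ γ₂) δ) a + eimg γ₂ (kat δ) ∧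
    fib (esum (ecomp γ₁ δ) (ecomp γ₂ δ)) a ⊆
      fib (ecomp (esum γ₁ γ₂) δ) a + eimg γ₁ (kat δ) := by
  obtain ⟨⟨_, hδadd, hδneg⟩, hδsurj, _⟩ := hδ
  obtain ⟨⟨_, h₁add, h₁neg⟩, h₁surj, _⟩ := h₁
  obtain ⟨⟨_, h₂add, h₂neg⟩, h₂surj, _⟩ := h₂
  have key : ∀ (α β : Set (A × A)),
      (IsAddSubgroupSet α) → (∀ x : A, ∃ y : A, (x, y) ∈ α) → ∀ c : A,
      (∃ c₁ c₂ : A, (a, c₁) ∈ ecomp β δ ∧ (a, c₂) ∈ ecomp α δ ∧ c = c₁ + c₂) →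
      c ∈ fib (ecomp (esum β α) δ) a + eimg α (kat δ) := by
    intro α β ⟨_, hαadd, hαneg⟩ hαsurj c ⟨c₁, c₂, ⟨b₁, hb₁, hc₁⟩, ⟨b₂, hb₂, hc₂⟩, hc⟩
    obtain ⟨c₂', hc₂'⟩ := hαsurj b₁
    refine ⟨c₁ + c₂', ⟨b₁, hb₁, c₁, c₂', hc₁, hc₂', rfl⟩, c₂ - c₂',
      ⟨b₂ - b₁, ?_, ?_⟩, by rw [hc]; abel⟩
    · have := hδadd _ hb₂ _ (hδneg _ hb₁)
      simpa [kat, Prod.ext_iff, sub_eq_add_neg] using this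
    · have := hαadd _ hc₂ _ (hαneg _ hc₂')
      simpa [Prod.ext_iff, sub_eq_add_neg] using this
  constructor
  · rintro c ⟨c₁, c₂, hc₁, hc₂, hc⟩
    exact key γ₂ γ₁ ⟨by assumption, h₂add, h₂neg⟩ h₂surj c ⟨c₁, c₂, hc₁, hc₂, hc⟩
  · rintro c ⟨c₁, c₂, hc₁, hc₂, hc⟩
    have := key γ₁ γ₂ ⟨by assumption, h₁add, h₁neg⟩ h₁surj c ⟨c₂, c₁, hc₂, hc₁, by rw [show c = c₁ + c₂ from hc]; abel⟩
    -- this gives membership in fib (ecomp (esum γ₂ γ₁) δ) a + eimg γ₁ (kat δ); need esum γ₁ γ₂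
    obtain ⟨x, ⟨b, hb, u, v, hu, hv, hx⟩, y, hy, hxy⟩ := this
    exact ⟨x, ⟨b, hb, v, u, hv, hu, by rw [hx]; abel⟩, y, hy, hxy⟩
end

section
/- Let A be an additive abelian group and let γ₁, γ₁′, γ₂, γ₂′ be endogenies of A with γ₁ ∼ γ₁′ and γ₂ ∼ γ₂′. Then γ₁ + γ₂ ∼ γ₁′ + γ₂′ and γ₁ ∘ γ₂ ∼ γ₁′ ∘ γ₂′; i.e., equivalence of endogenies is preserved under pointwise addition and under composition. -/
open Pointwise

variable {A : Type*} [AddCommGroup A]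

lemma fib_sub_mem_kat {γ : Set (A × A)} (hγ : IsAddSubgroupSet γ) {a b c : A}
    (hb : b ∈ fib γ a) (hc : c ∈ fib γ a) : b - c ∈ kat γ := by
  have := hγ.2.1 _ hb _ (hγ.2.2 _ hc)
  simpa [kat, Prod.ext_iff, sub_eq_add_neg] using this

lemma fib_finite {γ : Set (A × A)} (hγ : IsEndogeny γ) (a : A) : (fib γ a).Finite := by
  rcases Set.eq_empty_or_nonempty (fib γ a) with h | ⟨c, hc⟩
  · simp [h]
  · apply (hγ.2.2.image (fun x => c + x)).subset
    intro b hb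
    exact ⟨b - c, by simpa using fib_sub_mem_kat hγ.1 hb hc, by simp⟩

lemma fib_add {γ : Set (A × A)} (hγ : IsEndogeny γ) (a b : A) :
    fib γ (a + b) = fib γ a + fib γ b := by
  ext c
  constructor
  · intro hc
    obtain ⟨d, hd⟩ := hγ.2.1 b
    refine ⟨c - d, ?_, d, hd, by simp⟩
    have := hγ.1.2.1 _ hc _ (hγ.1.2.2 _ hd)
    simpa [fib, Prod.ext_iff, sub_eq_add_neg] using this
  · rintro ⟨x, hx, y, hy, rfl⟩
    exact hγ.1.2.1 _ hx _ hy

lemma mem_eimg {γ : Set (A × A)} {S : Set A} {c : A} :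
    c ∈ eimg γ S ↔ ∃ b ∈ S, c ∈ fib γ b := Iff.rfl

lemma eimg_add {γ : Set (A × A)} (hγ : IsEndogeny γ) (S T : Set A) :
    eimg γ (S + T) = eimg γ S + eimg γ T := by
  ext c
  constructor
  · rintro ⟨x, ⟨s, hs, t, ht, rfl⟩, hc⟩
    have hc' : c ∈ fib γ (s + t) := hc
    rw [fib_add hγ] at hc'
    rcases hc' with ⟨u, hu, v, hv, rfl⟩
    exact ⟨u, ⟨s, hs, hu⟩, v, ⟨t, ht, hv⟩, rfl⟩
  · rintro ⟨u, ⟨s, hs, hu⟩, v, ⟨t, ht, hv⟩, rfl⟩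
    refine ⟨s + t, ⟨s, hs, t, ht, rfl⟩, ?_⟩
    have h2 : u + v ∈ fib γ (s + t) := by
      rw [fib_add hγ]; exact ⟨u, hu, v, hv, rfl⟩
    exact h2

lemma eimg_add_set {γ : Set (A × A)} {S T : Set A} :
    eimg γ S + T = ⋃ b ∈ S, (fib γ b + T) := by
  ext c
  simp only [Set.mem_add, mem_eimg, Set.mem_iUnion]
  constructor
  · rintro ⟨x, ⟨b, hb, hx⟩, t, ht, rfl⟩
    exact ⟨b, hb, x, hx, t, ht, rfl⟩
  · rintro ⟨b, hb, x, hx, t, ht, rfl⟩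
    exact ⟨x, ⟨b, hb, hx⟩, t, ht, rfl⟩

lemma eimg_congr {γ γ' : Set (A × A)} (F : AddSubgroup A)
    (h : ∀ b, fib γ b + (F : Set A) = fib γ' b + (F : Set A)) (S : Set A) :
    eimg γ S + (F : Set A) = eimg γ' S + (F : Set A) := by
  rw [eimg_add_set, eimg_add_set]
  exact Set.iUnion₂_congr fun b _ => h b

lemma fib_esum (γ₁ γ₂ : Set (A × A)) (a : A) :
    fib (esum γ₁ γ₂) a = fib γ₁ a + fib γ₂ a := by
  ext c
  constructor
  · rintro ⟨b₁, b₂, h1, h2, rfl⟩; exact ⟨b₁, h1, b₂, h2, rfl⟩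
  · rintro ⟨b₁, h1, b₂, h2, rfl⟩; exact ⟨b₁, b₂, h1, h2, rfl⟩

lemma fib_ecomp (γ₁ γ₂ : Set (A × A)) (a : A) :
    fib (ecomp γ₁ γ₂) a = eimg γ₁ (fib γ₂ a) := rfl

/-- The image of a subgroup under an endogeny, as a subgroup. -/
def eimgSubgroup (γ : Set (A × A)) (hγ : IsAddSubgroupSet γ) (F : AddSubgroup A) :
    AddSubgroup A where
  carrier := eimg γ (F : Set A)
  zero_mem' := ⟨0, F.zero_mem, hγ.1⟩
  add_mem' := by
    rintro x y ⟨a, ha, hx⟩ ⟨b, hb, hy⟩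
    exact ⟨a + b, F.add_mem ha hb, hγ.2.1 _ hx _ hy⟩
  neg_mem' := by
    rintro x ⟨a, ha, hx⟩
    exact ⟨-a, F.neg_mem ha, hγ.2.2 _ hx⟩

/-- equivalence of endogenies is preserved under pointwise
addition and under composition. -/
theorem eequiv_esum_ecomp (γ₁ γ₁' γ₂ γ₂' : Set (A × A))
    (h₁ : IsEndogeny γ₁) (h₁' : IsEndogeny γ₁')
    (h₂ : IsEndogeny γ₂) (h₂' : IsEndogeny γ₂')
    (e₁ : EEquiv γ₁ γ₁') (e₂ : EEquiv γ₂ γ₂') :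
    EEquiv (esum γ₁ γ₂) (esum γ₁' γ₂') ∧ EEquiv (ecomp γ₁ γ₂) (ecomp γ₁' γ₂') := by
  obtain ⟨F₁, hF₁, hf₁⟩ := e₁
  obtain ⟨F₂, hF₂, hf₂⟩ := e₂
  constructor
  · refine ⟨F₁ ⊔ F₂, ?_, fun a => ?_⟩
    · rw [AddSubgroup.add_normal]; exact hF₁.add hF₂
    · rw [AddSubgroup.add_normal, fib_esum, fib_esum]
      calc fib γ₁ a + fib γ₂ a + ((F₁ : Set A) + (F₂ : Set A))
          = (fib γ₁ a + (F₁ : Set A)) + (fib γ₂ a + (F₂ : Set A)) := by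
            rw [add_add_add_comm]
        _ = (fib γ₁' a + (F₁ : Set A)) + (fib γ₂' a + (F₂ : Set A)) := by
            rw [hf₁ a, hf₂ a]
        _ = fib γ₁' a + fib γ₂' a + ((F₁ : Set A) + (F₂ : Set A)) := by
            rw [add_add_add_comm]
  · set G := eimgSubgroup γ₁' h₁'.1 F₂ with hG
    have hGcoe : (G : Set A) = eimg γ₁' (F₂ : Set A) := rfl
    have hGfin : (G : Set A).Finite := by
      rw [hGcoe]
      have : eimg γ₁' (F₂ : Set A) = ⋃ b ∈ (F₂ : Set A), fib γ₁' b := by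
        ext c; simp [mem_eimg]
      rw [this]
      exact hF₂.biUnion fun b _ => fib_finite h₁' b
    refine ⟨F₁ ⊔ G, ?_, fun a => ?_⟩
    · rw [AddSubgroup.add_normal]; exact hF₁.add hGfin
    · rw [AddSubgroup.add_normal, fib_ecomp, fib_ecomp]
      calc eimg γ₁ (fib γ₂ a) + ((F₁ : Set A) + (G : Set A))
          = (eimg γ₁ (fib γ₂ a) + (F₁ : Set A)) + (G : Set A) := by
            rw [add_assoc]
        _ = (eimg γ₁' (fib γ₂ a) + (F₁ : Set A)) + (G : Set A) := by
            rw [eimg_congr F₁ hf₁]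
        _ = (eimg γ₁' (fib γ₂ a) + (G : Set A)) + (F₁ : Set A) := by
            rw [add_right_comm]
        _ = eimg γ₁' (fib γ₂ a + (F₂ : Set A)) + (F₁ : Set A) := by
            rw [hGcoe, ← eimg_add h₁']
        _ = eimg γ₁' (fib γ₂' a + (F₂ : Set A)) + (F₁ : Set A) := by
            rw [hf₂ a]
        _ = (eimg γ₁' (fib γ₂' a) + (G : Set A)) + (F₁ : Set A) := by
            rw [hGcoe, ← eimg_add h₁']
        _ = eimg γ₁' (fib γ₂' a) + ((F₁ : Set A) + (G : Set A)) := by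
            rw [add_right_comm, add_assoc]
end

section
/- Let A be an additive abelian group and let γ₁, γ₂, δ be endogenies of A. Then (γ₁ + γ₂) ∘ δ ∼ γ₁ ∘ δ + γ₂ ∘ δ; i.e., left-distributivity holds modulo the equivalence of endogenies. -/
/-!
Every element of `((γ₁ + γ₂) ∘ δ)[a]` lies in `(γ₁ ∘ δ + γ₂ ∘ δ)[a]`. Conversely, given
`c₁ ∈ γ₁[b]` and `c₂ ∈ γ₂[b']` with `b, b' ∈ δ[a]`, pick `e ∈ γ₂[b' - b]`: since `b' - b ∈ kat δ`, `e` lies in `kat (γ₂ ∘ δ) = γ₂[kat δ]`, and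
`c₁ + c₂ = (c₁ + (c₂ - e)) + e` with `c₂ - e ∈ γ₂[b]`. So both fibres agree modulo the subgroup
`kat (γ₂ ∘ δ)`, which is finite because `kat δ` and the fibres of `γ₂` are finite.
-/

open Pointwise

variable {A : Type*} [AddCommGroup A]

namespace IsAddSubgroupSet

variable {γ δ : Set (A × A)}

def toAddSubgroup (hγ : IsAddSubgroupSet γ) : AddSubgroup (A × A) where
  carrier := γ
  zero_mem' := hγ.1
  add_mem' hp hq := hγ.2.1 _ hp _ hq
  neg_mem' hp := hγ.2.2 _ hp

lemma sub_mem (hγ : IsAddSubgroupSet γ) {p q : A × A} (hp : p ∈ γ) (hq : q ∈ γ) :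
    p - q ∈ γ :=
  hγ.toAddSubgroup.sub_mem hp hq

lemma sub_mem_kat (hγ : IsAddSubgroupSet γ) {a b b' : A} (hb : (a, b) ∈ γ) (hb' : (a, b') ∈ γ) :
    b' - b ∈ kat γ := by
  simpa [kat] using hγ.sub_mem hb' hb

def katAddSubgroup (hγ : IsAddSubgroupSet γ) : AddSubgroup A :=
  hγ.toAddSubgroup.comap (AddMonoidHom.inr A A)

lemma coe_katAddSubgroup (hγ : IsAddSubgroupSet γ) : (hγ.katAddSubgroup : Set A) = kat γ :=
  rfl

lemma ecomp (hγ : IsAddSubgroupSet γ) (hδ : IsAddSubgroupSet δ) :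
    IsAddSubgroupSet (ecomp γ δ) := by
  refine ⟨⟨0, hδ.1, hγ.1⟩, ?_, ?_⟩
  · rintro ⟨a, c⟩ ⟨b, hab, hbc⟩ ⟨a', c'⟩ ⟨b', hab', hbc'⟩
    exact ⟨b + b', hδ.2.1 _ hab _ hab', hγ.2.1 _ hbc _ hbc'⟩
  · rintro ⟨a, c⟩ ⟨b, hab, hbc⟩
    exact ⟨-b, hδ.2.2 _ hab, hγ.2.2 _ hbc⟩

end IsAddSubgroupSet

lemma kat_ecomp (γ δ : Set (A × A)) : kat (ecomp γ δ) = eimg γ (kat δ) :=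
  rfl

namespace IsEndogeny

variable {γ : Set (A × A)}

lemma fib_subset_vadd_kat (hγ : IsEndogeny γ) {a b₀ : A} (hb₀ : (a, b₀) ∈ γ) :
    fib γ a ⊆ b₀ +ᵥ kat γ := fun b hb =>
  ⟨b - b₀, hγ.1.sub_mem_kat hb₀ hb, add_sub_cancel b₀ b⟩

lemma fib_finite (hγ : IsEndogeny γ) (a : A) : (fib γ a).Finite := by
  obtain ⟨b₀, hb₀⟩ := hγ.2.1 a
  exact (hγ.2.2.vadd_set (a := b₀)).subset (hγ.fib_subset_vadd_kat hb₀)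

lemma eimg_finite (hγ : IsEndogeny γ) {S : Set A} (hS : S.Finite) : (eimg γ S).Finite := by
  have : eimg γ S = ⋃ a ∈ S, fib γ a := by ext; simp [eimg, fib]
  exact this ▸ hS.biUnion fun a _ => hγ.fib_finite a

end IsEndogeny

lemma EEquiv.of_subset_of_subset_add {γ γ' : Set (A × A)} (F : AddSubgroup A)
    (hF : (F : Set A).Finite) (h : ∀ a, fib γ a ⊆ fib γ' a)
    (h' : ∀ a, fib γ' a ⊆ fib γ a + F) : EEquiv γ γ' := by
  refine ⟨F, hF, fun a => (Set.add_subset_add_right (h a)).antisymm ?_⟩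
  calc fib γ' a + F ⊆ fib γ a + F + F := Set.add_subset_add_right (h' a)
    _ = fib γ a + F := by rw [add_assoc, coe_add_coe]

section Distrib

variable (γ₁ γ₂ δ : Set (A × A))

lemma ecomp_esum_subset : ecomp (esum γ₁ γ₂) δ ⊆ esum (ecomp γ₁ δ) (ecomp γ₂ δ) := by
  rintro ⟨a, c⟩ ⟨b, hab, c₁, c₂, hbc₁, hbc₂, rfl⟩
  exact ⟨c₁, c₂, ⟨b, hab, hbc₁⟩, ⟨b, hab, hbc₂⟩, rfl⟩

variable {γ₂ δ}

lemma esum_ecomp_subset_add_kat (h₂ : IsAddSubgroupSet γ₂) (hsur₂ : ∀ a, ∃ b, (a, b) ∈ γ₂)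
    (hδ : IsAddSubgroupSet δ) (a : A) :
    fib (esum (ecomp γ₁ δ) (ecomp γ₂ δ)) a ⊆ fib (ecomp (esum γ₁ γ₂) δ) a + kat (ecomp γ₂ δ) := by
  rintro _ ⟨c₁, c₂, ⟨b, hab, hbc₁⟩, ⟨b', hab', hbc₂⟩, rfl⟩
  obtain ⟨e, he⟩ := hsur₂ (b' - b)
  have hbe : (b, c₂ - e) ∈ γ₂ := by simpa using h₂.sub_mem hbc₂ he
  exact ⟨c₁ + (c₂ - e), ⟨b, hab, c₁, c₂ - e, hbc₁, hbe, rfl⟩, e,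
    ⟨b' - b, hδ.sub_mem_kat hab hab', he⟩, by simp only [add_assoc, sub_add_cancel]⟩

end Distrib

theorem left_distrib_mod_equiv_general (γ₁ γ₂ δ : Set (A × A))
    (h₂ : IsEndogeny γ₂) (hδ : IsEndogeny δ) :
    EEquiv (ecomp (esum γ₁ γ₂) δ) (esum (ecomp γ₁ δ) (ecomp γ₂ δ)) := by
  have hkat := (h₂.1.ecomp hδ.1).coe_katAddSubgroup
  refine EEquiv.of_subset_of_subset_add (h₂.1.ecomp hδ.1).katAddSubgroup ?_
    (fun a _ hc => ecomp_esum_subset γ₁ γ₂ δ hc) ?_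
  · rw [hkat, kat_ecomp]
    exact h₂.eimg_finite hδ.2.2
  · rw [hkat]
    exact esum_ecomp_subset_add_kat γ₁ h₂.1 h₂.2.1 hδ.1

/-- left-distributivity holds modulo equivalence of endogenies:
`(γ₁ + γ₂) ∘ δ ∼ γ₁ ∘ δ + γ₂ ∘ δ`. -/
theorem left_distrib_mod_equiv (γ₁ γ₂ δ : Set (A × A))
    (h₁ : IsEndogeny γ₁) (h₂ : IsEndogeny γ₂) (hδ : IsEndogeny δ) :
    EEquiv (ecomp (esum γ₁ γ₂) δ) (esum (ecomp γ₁ δ) (ecomp γ₂ δ)) :=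
  left_distrib_mod_equiv_general γ₁ γ₂ δ h₂ hδ
end

section
/- Let A be an additive abelian group and let γ, δ be endogenies of A. If γ and δ commute sharply, i.e. im(γ ∘ δ − δ ∘ γ) ⊆ kat γ + kat δ, then in fact equality holds: im(γ ∘ δ − δ ∘ γ) = kat γ + kat δ. -/
/-!
Only `kat γ + kat δ ⊆ im (γ ∘ δ − δ ∘ γ)` needs proof, and it holds for any two subgroups of
`A × A`: routing through the middle point `0`, every `k ∈ kat γ` lies in `kat (γ ∘ δ)` and every
`-l` with `l ∈ kat δ` lies in `kat (δ ∘ γ)`, so `k + l ∈ kat (γ ∘ δ − δ ∘ γ)`.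
-/

open Pointwise

variable {A : Type*} [AddCommGroup A]

lemma kat_subset_eim (γ : Set (A × A)) : kat γ ⊆ eim γ :=
  fun _ hb => ⟨0, hb⟩

lemma kat_subset_kat_ecomp {γ δ : Set (A × A)} (hδ : (0 : A × A) ∈ δ) :
    kat γ ⊆ kat (ecomp γ δ) :=
  fun _ hb => ⟨0, hδ, hb⟩

lemma kat_add_kat_subset_kat_esum (γ₁ γ₂ : Set (A × A)) :
    kat γ₁ + kat γ₂ ⊆ kat (esum γ₁ γ₂) := by
  rintro _ ⟨b₁, hb₁, b₂, hb₂, rfl⟩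
  exact ⟨b₁, b₂, hb₁, hb₂, rfl⟩

lemma kat_eneg (γ : Set (A × A)) : kat (eneg γ) = -kat γ := rfl

lemma neg_kat {γ : Set (A × A)} (hγ : ∀ p ∈ γ, -p ∈ γ) : -kat γ = kat γ := by
  refine Set.Subset.antisymm (fun b hb => ?_) fun b hb => ?_ <;>
    simpa [kat] using hγ _ hb

/-- if `γ` and `δ` commute sharply, i.e.
`im (γ ∘ δ − δ ∘ γ) ⊆ kat γ + kat δ`, then equality holds. -/
theorem sharpCommute_im_eq (γ δ : Set (A × A))
    (hγ : IsEndogeny γ) (hδ : IsEndogeny δ) (h : SharpCommute γ δ) :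
    eim (esub (ecomp γ δ) (ecomp δ γ)) = kat γ + kat δ := by
  refine h.antisymm ?_
  have hδ_neg : kat δ ⊆ kat (eneg (ecomp δ γ)) := by
    rw [kat_eneg, ← neg_kat hδ.1.2.2]
    exact Set.neg_subset_neg.2 (kat_subset_kat_ecomp hγ.1.1)
  calc kat γ + kat δ ⊆ kat (ecomp γ δ) + kat (eneg (ecomp δ γ)) :=
        Set.add_subset_add (kat_subset_kat_ecomp hδ.1.1) hδ_neg
    _ ⊆ kat (esub (ecomp γ δ) (ecomp δ γ)) := kat_add_kat_subset_kat_esum _ _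
    _ ⊆ eim (esub (ecomp γ δ) (ecomp δ γ)) := kat_subset_eim _
end

section
/- Let A be an additive abelian group and let γ, δ be endogenies of A which commute sharply. Then δ[kat γ] ⊆ kat γ + kat δ; in particular, kat γ is weakly δ-invariant. -/
open Pointwise

variable {A : Type*} [AddCommGroup A]

/-- if `γ` and `δ` commute sharply, then
`δ[kat γ] ⊆ kat γ + kat δ`; i.e. `kat γ` is weakly `δ`-invariant. -/
theorem kat_weakly_invariant (γ δ : Set (A × A))
    (hγ : IsEndogeny γ) (hδ : IsEndogeny δ) (h : SharpCommute γ δ) :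
    eimg δ (kat γ) ⊆ kat γ + kat δ := by
  rintro c ⟨b, hb, hbc⟩
  -- (0, c) ∈ δ ∘ γ
  have h1 : ((0 : A), c) ∈ ecomp δ γ := ⟨b, hb, hbc⟩
  -- (0, 0) ∈ γ ∘ δ
  have h2 : ((0 : A), (0 : A)) ∈ ecomp γ δ := ⟨0, hδ.1.1, hγ.1.1⟩
  have h3 : (-c) ∈ eim (esub (ecomp γ δ) (ecomp δ γ)) := by
    refine ⟨0, 0, -c, h2, ?_, by simp⟩
    show ((0 : A), -(-c)) ∈ ecomp δ γ
    rwa [neg_neg]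
  obtain ⟨k, hk, l, hl, hkl⟩ := h h3
  have hk' : -k ∈ kat γ := by
    have := hγ.1.2.2 _ hk; simpa [kat, Prod.neg_mk] using this
  have hl' : -l ∈ kat δ := by
    have := hδ.1.2.2 _ hl; simpa [kat, Prod.neg_mk] using this
  exact ⟨-k, hk', -l, hl', by simp only [] at hkl ⊢; rw [← neg_add]; rw [hkl, neg_neg]⟩
end

section
/- Let A be an additive abelian group, let γ be an endogeny of A, and let δ₁, δ₂ be endogenies of A each commuting sharply with γ. Then δ₁ + δ₂ and −δ₁ commute sharply with γ; i.e., the sharp centraliser C♯(γ) is closed under pointwise addition and negation. -/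
open Pointwise

variable {A : Type*} [AddCommGroup A]

/-- the sharp centraliser `C♯(γ)` is closed under pointwise
addition and negation. -/
theorem sharp_centraliser_add_neg (γ δ₁ δ₂ : Set (A × A))
    (hγ : IsEndogeny γ) (hδ₁ : IsEndogeny δ₁) (hδ₂ : IsEndogeny δ₂)
    (hc₁ : SharpCommute γ δ₁) (hc₂ : SharpCommute γ δ₂) :
    SharpCommute γ (esum δ₁ δ₂) ∧ SharpCommute γ (eneg δ₁) := by
  obtain ⟨⟨hγ0, hγadd, hγneg⟩, hγsurj, hγfin⟩ := hγ
  constructor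
  · intro x hx
    obtain ⟨a, b₁, b₂, hb₁, hb₂, hx'⟩ := hx
    obtain ⟨b, ⟨u₁, u₂, hu₁, hu₂, hb⟩, hbb₁⟩ := hb₁
    obtain ⟨e, hae, v₁, v₂, hv₁, hv₂, hv⟩ := hb₂
    simp only at hb hv hx' hu₁ hu₂ hv₁ hv₂ hae hbb₁
    obtain ⟨c₁, hc₁'⟩ := hγsurj u₁
    have hc₂' : (u₂, b₁ - c₁) ∈ γ := by
      have := hγadd _ hbb₁ _ (hγneg _ hc₁')
      have heq : (b, b₁) + -(u₁, c₁) = ((u₂ : A), b₁ - c₁) := by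
        rw [hb]; simp [Prod.ext_iff, sub_eq_add_neg]
      rwa [heq] at this
    have h₁ : c₁ - v₁ ∈ kat γ + kat δ₁ := by
      apply hc₁
      exact ⟨a, c₁, -v₁, ⟨u₁, hu₁, hc₁'⟩, ⟨e, hae, by simpa using hv₁⟩,
        by rw [sub_eq_add_neg]⟩
    have h₂ : (b₁ - c₁) - v₂ ∈ kat γ + kat δ₂ := by
      apply hc₂
      exact ⟨a, b₁ - c₁, -v₂, ⟨u₂, hu₂, hc₂'⟩, ⟨e, hae, by simpa using hv₂⟩,
        by rw [sub_eq_add_neg]⟩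
    rw [Set.mem_add] at h₁ h₂ ⊢
    obtain ⟨k₁, hk₁, l₁, hl₁, e₁⟩ := h₁
    obtain ⟨k₂, hk₂, l₂, hl₂, e₂⟩ := h₂
    refine ⟨k₁ + k₂, ?_, l₁ + l₂, ⟨l₁, l₂, hl₁, hl₂, rfl⟩, ?_⟩
    · have := hγadd _ hk₁ _ hk₂
      simpa [kat, Prod.ext_iff] using this
    · have hv' : b₂ = -(v₁ + v₂) := neg_eq_iff_eq_neg.mp hv
      calc (k₁ + k₂) + (l₁ + l₂) = (k₁ + l₁) + (k₂ + l₂) := by abel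
        _ = (c₁ - v₁) + ((b₁ - c₁) - v₂) := by rw [e₁, e₂]
        _ = b₁ + b₂ := by rw [hv']; abel
        _ = x := hx'.symm
  · intro x hx
    obtain ⟨a, b₁, b₂, hb₁, hb₂, hx'⟩ := hx
    obtain ⟨b, hb, hbb₁⟩ := hb₁
    obtain ⟨e, hae, hed⟩ := hb₂
    simp only at hx' hae hbb₁
    have hb' : (a, -b) ∈ δ₁ := hb
    have hed' : (e, b₂) ∈ δ₁ := by
      have : ((e : A), -(-b₂)) ∈ δ₁ := hed
      rwa [neg_neg] at this
    have h₁ : -x ∈ kat γ + kat δ₁ := by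
      apply hc₁
      refine ⟨a, -b₁, -b₂, ⟨-b, hb', ?_⟩, ⟨e, hae, by simpa using hed'⟩, ?_⟩
      · have := hγneg _ hbb₁; exact this
      · rw [hx']; simp; abel
    rw [Set.mem_add] at h₁ ⊢
    obtain ⟨k, hk, l, hl, he⟩ := h₁
    refine ⟨-k, ?_, -l, ?_, ?_⟩
    · have := hγneg _ hk
      simpa [kat, Prod.ext_iff] using this
    · show ((0 : A), -(-l)) ∈ δ₁
      rwa [neg_neg]
    · have : -(k + l) = x := by rw [he]; simp
      rw [← this]; abel
end

section
/- Let A be an additive abelian group, let γ be an endogeny of A, and let δ₁, δ₂ be endogenies of A each commuting sharply with γ. Then the composition δ₁ ∘ δ₂ commutes sharply with γ; i.e., the sharp centraliser C♯(γ) is closed under composition. -/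
open Pointwise

variable {A : Type*} [AddCommGroup A]

lemma IsAddSubgroupSet.sub_mem_s11 {γ : Set (A × A)} (h : IsAddSubgroupSet γ)
    {p q : A × A} (hp : p ∈ γ) (hq : q ∈ γ) : p - q ∈ γ := by
  rw [sub_eq_add_neg]
  exact h.2.1 _ hp _ (h.2.2 _ hq)

/-- the sharp centraliser `C♯(γ)` is closed under composition. -/
theorem sharp_centraliser_comp (γ δ₁ δ₂ : Set (A × A))
    (hγ : IsEndogeny γ) (hδ₁ : IsEndogeny δ₁) (hδ₂ : IsEndogeny δ₂)
    (hc₁ : SharpCommute γ δ₁) (hc₂ : SharpCommute γ δ₂) :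
    SharpCommute γ (ecomp δ₁ δ₂) := by
  intro c hc
  obtain ⟨a, b₁, b₂, hb₁, hb₂, hcb⟩ := hc
  -- hb₁ : (a, b₁) ∈ ecomp γ (ecomp δ₁ δ₂)
  obtain ⟨m, ⟨n, han, hnm⟩, hmb₁⟩ := hb₁
  -- hb₂ : (a, -b₂) ∈ ecomp (ecomp δ₁ δ₂) γ
  obtain ⟨g, hag, h, hgh, hhb⟩ := hb₂
  -- totality choices
  obtain ⟨k, hnk⟩ := hγ.2.1 n
  obtain ⟨w, hkw⟩ := hδ₁.2.1 k
  -- k - h ∈ kat γ + kat δ₂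
  have hkh : k - h ∈ kat γ + kat δ₂ := by
    apply hc₂
    refine ⟨a, k, -h, ⟨n, han, hnk⟩, ?_, (sub_eq_add_neg k h)⟩
    show ((a : A), -(-h)) ∈ ecomp δ₂ γ
    rw [neg_neg]
    exact ⟨g, hag, hgh⟩
  obtain ⟨x, hx, y, hy, hxy⟩ := hkh
  have hxy' : x + y = k - h := hxy
  -- b₁ - w ∈ kat γ + kat δ₁
  have hb1w : b₁ - w ∈ kat γ + kat δ₁ := by
    apply hc₁
    refine ⟨n, b₁, -w, ⟨m, hnm, hmb₁⟩, ?_, (sub_eq_add_neg b₁ w)⟩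
    show ((n : A), -(-w)) ∈ ecomp δ₁ γ
    rw [neg_neg]
    exact ⟨k, hnk, hkw⟩
  obtain ⟨x₁, hx₁, y₁, hy₁, hxy₁⟩ := hb1w
  have hxy₁' : x₁ + y₁ = b₁ - w := hxy₁
  obtain ⟨t, hyt⟩ := hδ₁.2.1 y
  -- (x, w - -b₂ - t) ∈ δ₁
  have hr : ((x : A), w - -b₂ - t) ∈ δ₁ := by
    have h1 : ((k - h : A), w - -b₂) ∈ δ₁ := by
      have := hδ₁.1.sub_mem_s11 hkw hhb
      simpa [Prod.sub_def] using this
    have h2 : ((k - h - y : A), w - -b₂ - t) ∈ δ₁ := by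
      have := hδ₁.1.sub_mem_s11 h1 hyt
      simpa [Prod.sub_def] using this
    have hx' : x = k - h - y := eq_sub_of_add_eq hxy'
    rwa [hx']
  -- -(w - -b₂ - t) ∈ kat γ + kat δ₁
  have hnegr : -(w - -b₂ - t) ∈ kat γ + kat δ₁ := by
    apply hc₁
    refine ⟨0, 0, -(w - -b₂ - t), ⟨0, hδ₁.1.1, hγ.1.1⟩, ?_, (zero_add _).symm⟩
    show ((0 : A), -(-(w - -b₂ - t))) ∈ ecomp δ₁ γ
    rw [neg_neg]
    exact ⟨x, hx, hr⟩
  obtain ⟨x₂, hx₂, y₂, hy₂, hxy₂⟩ := hnegr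
  have hxy₂' : x₂ + y₂ = -(w - -b₂ - t) := hxy₂
  -- assemble
  refine ⟨x₁ - x₂, ?_, y₁ + t - y₂, ?_, ?_⟩
  · show ((0 : A), x₁ - x₂) ∈ γ
    have := hγ.1.sub_mem_s11 hx₁ hx₂
    simpa [Prod.sub_def] using this
  · show ((0 : A), y₁ + t - y₂) ∈ ecomp δ₁ δ₂
    refine ⟨y, hy, ?_⟩
    have h1 : ((0 + y : A), y₁ + t) ∈ δ₁ := hδ₁.1.2.1 _ hy₁ _ hyt
    have h2 : ((0 + y - 0 : A), y₁ + t - y₂) ∈ δ₁ := by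
      have := hδ₁.1.sub_mem_s11 h1 hy₂
      simpa [Prod.sub_def] using this
    simpa using h2
  · have hc' : c = b₁ + b₂ := hcb
    have hb1 : b₁ = x₁ + y₁ + w := by rw [hxy₁']; abel
    have hb2 : b₂ = t - w - (x₂ + y₂) := by rw [hxy₂']; abel
    show x₁ - x₂ + (y₁ + t - y₂) = c
    rw [hc', hb1, hb2]; abel
end

section
/- Let A be an additive abelian group and let γ, δ be sharply commuting endogenies of A. If B ≤ A is a weakly γ-invariant subgroup, then the subgroup generated by δ[B] is again weakly γ-invariant; more precisely, γ[δ[B]] ⊆ δ[B] + kat γ (where δ[B] is already a subgroup of A since it contains kat δ). -/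
open Pointwise

variable {A : Type*} [AddCommGroup A]

/-- if `γ, δ` commute sharply and `B` is weakly `γ`-invariant,
then `δ[B]` is again weakly `γ`-invariant: `γ[δ[B]] ⊆ δ[B] + kat γ`. -/
theorem image_weakly_invariant (γ δ : Set (A × A))
    (hγ : IsEndogeny γ) (hδ : IsEndogeny δ) (hc : SharpCommute γ δ)
    (B : AddSubgroup A) (hB : eimg γ (B : Set A) ⊆ (B : Set A) + kat γ) :
    eimg γ (eimg δ (B : Set A)) ⊆ eimg δ (B : Set A) + kat γ := by
  -- helper facts about γ and δ as subgroups of A × A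
  obtain ⟨⟨hγ0, hγadd, hγneg⟩, hγsurj, -⟩ := hγ
  obtain ⟨⟨hδ0, hδadd, hδneg⟩, hδsurj, -⟩ := hδ
  have γadd : ∀ a b c d : A, (a, b) ∈ γ → (c, d) ∈ γ → (a + c, b + d) ∈ γ := by
    intro a b c d h1 h2
    have := hγadd _ h1 _ h2
    simpa using this
  have γneg : ∀ a b : A, (a, b) ∈ γ → (-a, -b) ∈ γ := by
    intro a b h1
    have := hγneg _ h1
    simpa using this
  have δadd : ∀ a b c d : A, (a, b) ∈ δ → (c, d) ∈ δ → (a + c, b + d) ∈ δ := by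
    intro a b c d h1 h2
    have := hδadd _ h1 _ h2
    simpa using this
  have δneg : ∀ a b : A, (a, b) ∈ δ → (-a, -b) ∈ δ := by
    intro a b h1
    have := hδneg _ h1
    simpa using this
  intro c hcmem
  obtain ⟨x, ⟨b, hbB, hbx⟩, hxc⟩ := hcmem
  -- (b, c) ∈ γ ∘ δ
  have hbc : (b, c) ∈ ecomp γ δ := ⟨x, hbx, hxc⟩
  -- pick y with (b, y) ∈ δ ∘ γ
  obtain ⟨x', hx'⟩ := hγsurj b
  obtain ⟨y, hy⟩ := hδsurj x'
  have hby : (b, y) ∈ ecomp δ γ := ⟨x', hx', hy⟩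
  -- sharp commutation at b : c - y ∈ kat γ + kat δ
  have h1 : c - y ∈ kat γ + kat δ := by
    apply hc
    refine ⟨b, c, -y, hbc, ?_, by abel⟩
    show (b, -(-y)) ∈ ecomp δ γ
    rwa [neg_neg]
  rw [Set.mem_add] at h1
  obtain ⟨k, hk, l, hl, hkl⟩ := h1
  -- x' ∈ γ[B] ⊆ B + kat γ
  have hx'B : x' ∈ (B : Set A) + kat γ := hB ⟨b, hbB, hx'⟩
  rw [Set.mem_add] at hx'B
  obtain ⟨b', hb', k', hk', hbk'⟩ := hx'B
  -- pick z with (k', z) ∈ δ, then (0, z) ∈ δ ∘ γ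
  obtain ⟨z, hz⟩ := hδsurj k'
  have hz0 : ((0 : A), z) ∈ ecomp δ γ := ⟨k', hk', hz⟩
  -- pick w with (0, w) ∈ γ, then (0, w) ∈ γ ∘ δ
  obtain ⟨w, hw⟩ := hγsurj 0
  have hw0 : ((0 : A), w) ∈ ecomp γ δ := ⟨0, hδ0, hw⟩
  -- sharp commutation at 0 : w - z ∈ kat γ + kat δ
  have h2 : w - z ∈ kat γ + kat δ := by
    apply hc
    refine ⟨(0 : A), w, -z, hw0, ?_, by abel⟩
    show ((0 : A), -(-z)) ∈ ecomp δ γ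
    rwa [neg_neg]
  rw [Set.mem_add] at h2
  obtain ⟨k₂, hk₂, l₂, hl₂, hkl₂⟩ := h2
  -- d₁ := y + l - z - l₂ ∈ δ[B], witnessed by b'
  have hd₁ : (b', y + l - z - l₂) ∈ δ := by
    have h3 : (x' + 0, y + l) ∈ δ := δadd _ _ _ _ hy hl
    have h4 : (-k', -z) ∈ δ := δneg _ _ hz
    have h5 : (x' + 0 + -k', y + l + -z) ∈ δ := δadd _ _ _ _ h3 h4
    have h6 : (-(0 : A), -l₂) ∈ δ := δneg _ _ hl₂
    have h7 := δadd _ _ _ _ h5 h6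
    have : x' + 0 + -k' + -(0 : A) = b' := by rw [← hbk']; abel
    rw [this] at h7
    convert h7 using 2
    abel
  -- e := w - k₂ + k ∈ kat γ
  have he : w - k₂ + k ∈ kat γ := by
    have h3 : (-(0 : A), -k₂) ∈ γ := γneg _ _ hk₂
    have h4 := γadd _ _ _ _ hw h3
    have h5 := γadd _ _ _ _ h4 hk
    have : (0 : A) + -(0 : A) + 0 = (0 : A) := by abel
    rw [this] at h5
    show ((0:A), w - k₂ + k) ∈ γ
    rw [sub_eq_add_neg]
    exact h5
  have hceq : c = (y + l - z - l₂) + (w - k₂ + k) := by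
    have hc2 : c = y + (k + l) := by rw [hkl]; abel
    have hw' : w = k₂ + l₂ + z := by rw [hkl₂]; abel
    rw [hc2, hw']; abel
  rw [hceq]
  exact Set.add_mem_add ⟨b', hb', hd₁⟩ he
end

section
/- Let A be an additive abelian group, let g : A → A be a group endomorphism whose graph γ := {(a, g(a)) : a ∈ A} commutes sharply with an endogeny δ of A. Then ker δ := {a ∈ A : (a, 0) ∈ δ} is fully γ-invariant, i.e. g maps ker δ into ker δ. -/
open Pointwise

variable {A : Type*} [AddCommGroup A]

/-- if the graph of an endomorphism `g` commutes sharply with an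
endogeny `δ`, then `ker δ` is fully invariant under `g`. -/
theorem ker_fully_invariant (g : A →+ A) (δ : Set (A × A)) (hδ : IsEndogeny δ)
    (hc : SharpCommute {p : A × A | p.2 = g p.1} δ) :
    ∀ a : A, (a, (0 : A)) ∈ δ → (g a, (0 : A)) ∈ δ := by
  intro a ha
  obtain ⟨b, hb⟩ := hδ.2.1 (g a)
  have hmem : -b ∈ eim (esub (ecomp {p : A × A | p.2 = g p.1} δ)
      (ecomp δ {p : A × A | p.2 = g p.1})) := by
    refine ⟨a, 0, -b, ⟨0, ha, by simp⟩, ?_, by simp⟩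
    show (a, -(-b)) ∈ ecomp δ {p : A × A | p.2 = g p.1}
    exact ⟨g a, rfl, by simpa using hb⟩
  obtain ⟨x, hx, y, hy, hxy⟩ := hc hmem
  have hx0 : x = 0 := by simpa [kat] using hx
  have hyb : y = -b := by rw [hx0] at hxy; simpa using hxy
  have hyd : ((0 : A), -b) ∈ δ := hyb ▸ hy
  have := hδ.1.2.1 _ hb _ hyd
  simpa using this
end

section
/- Restriction Lemma: Let A be an additive abelian group, γ an endogeny of A, and B ≤ A a weakly γ-invariant subgroup. Then the restriction-corestriction ρ_B(γ) := γ ∩ (B × B) is an endogeny of B, and its katakernel satisfies kat ρ_B(γ) ⊆ (kat γ) ∩ B. -/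
open Pointwise

variable {A : Type*} [AddCommGroup A]

/-- Restriction Lemma: if `B ≤ A` is weakly `γ`-invariant, then
the restriction-corestriction `ρ_B(γ) = γ ∩ (B × B)` is an endogeny of `B`,
and `kat ρ_B(γ) ⊆ kat γ ∩ B`. -/
theorem restriction_lemma (γ : Set (A × A)) (hγ : IsEndogeny γ)
    (B : AddSubgroup A) (hB : eimg γ (B : Set A) ⊆ (B : Set A) + kat γ) :
    IsEndogeny {p : B × B | ((p.1 : A), (p.2 : A)) ∈ γ} ∧
    ∀ b : B, b ∈ kat {p : B × B | ((p.1 : A), (p.2 : A)) ∈ γ} →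
      (b : A) ∈ kat γ ∩ (B : Set A) := by
  obtain ⟨⟨hz, hadd, hneg⟩, hsurj, hfin⟩ := hγ
  refine ⟨⟨⟨hz, ?_, ?_⟩, ?_, ?_⟩, ?_⟩
  · rintro ⟨p1, p2⟩ hp ⟨q1, q2⟩ hq
    exact hadd _ hp _ hq
  · rintro ⟨p1, p2⟩ hp
    exact hneg _ hp
  · intro a
    obtain ⟨b, hb⟩ := hsurj (a : A)
    have : b ∈ (B : Set A) + kat γ := hB ⟨a, a.2, hb⟩
    obtain ⟨c, hc, k, hk, hck⟩ := this
    refine ⟨⟨c, hc⟩, ?_⟩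
    have h2 := hadd _ hb _ (hneg _ hk)
    have e1 : ((a:A), b) + -(0, k) = ((a:A), c) := by
      simp only [Prod.neg_mk, Prod.mk_add_mk, add_neg_cancel_right, ← hck]
      simp
    rw [e1] at h2
    exact h2
  · have : Set.InjOn (fun b : B => (b : A))
        (kat {p : B × B | ((p.1 : A), (p.2 : A)) ∈ γ}) := fun x _ y _ h =>
      Subtype.ext h
    refine Set.Finite.of_finite_image ?_ this
    exact hfin.subset (by rintro _ ⟨b, hb, rfl⟩; exact hb)
  · intro b hb
    exact ⟨hb, b.2⟩
end

section
/- Katakernel Lemma, part 1: Let A be an additive abelian group and Γ a prering of endogenies of A (a set of endogenies closed under +, − and ∘). Then the katakernel Kat(Γ), defined as the subgroup of A generated by ⋃_{γ ∈ Γ} kat γ, is fully Γ-invariant: γ[Kat(Γ)] ⊆ Kat(Γ) for every γ ∈ Γ. -/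
open Pointwise

variable {A : Type*} [AddCommGroup A]

/-- Katakernel Lemma, part 1: the katakernel `Kat(Γ)` of a
prering `Γ` is fully `Γ`-invariant. -/
theorem kat_prering_fully_invariant (Γ : Set (Set (A × A))) (hΓ : IsPrering Γ) :
    ∀ γ ∈ Γ, eimg γ (Kat Γ : Set A) ⊆ (Kat Γ : Set A) := by
  obtain ⟨hend, hsum, hneg, hcomp⟩ := hΓ
  intro γ hγ b hb
  obtain ⟨a, ha, hab⟩ := hb
  -- key: for a ∈ closure, all b with (a,b) ∈ γ are in Kat Γ
  have key : ∀ a, a ∈ Kat Γ → ∀ b : A, (a, b) ∈ γ → b ∈ Kat Γ := by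
    intro a ha
    refine AddSubgroup.closure_induction
      (p := fun x _ => ∀ b : A, (x, b) ∈ γ → b ∈ Kat Γ) ?_ ?_ ?_ ?_ ha
    · intro x hx b hxb
      simp only [Set.mem_iUnion] at hx
      obtain ⟨δ, hδ, hxδ⟩ := hx
      have : ((0 : A), b) ∈ ecomp γ δ := ⟨x, hxδ, hxb⟩
      exact AddSubgroup.subset_closure
        (Set.mem_iUnion.2 ⟨ecomp γ δ, Set.mem_iUnion.2 ⟨hcomp γ hγ δ hδ, this⟩⟩)
    · intro b hb
      exact AddSubgroup.subset_closure
        (Set.mem_iUnion.2 ⟨γ, Set.mem_iUnion.2 ⟨hγ, hb⟩⟩)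
    · intro x y hx hy ihx ihy b hxyb
      obtain ⟨⟨hz, hadd, hn⟩, hsurj, _⟩ := hend γ hγ
      obtain ⟨b₁, hb₁⟩ := hsurj x
      obtain ⟨b₂, hb₂⟩ := hsurj y
      have h1 : ((x + y : A), b₁ + b₂) ∈ γ := hadd _ hb₁ _ hb₂
      have h2 : ((0 : A), b - (b₁ + b₂)) ∈ γ := by
        have h := hadd _ hxyb _ (hn _ h1)
        have he : ((0 : A), b - (b₁ + b₂)) = (x + y, b) + -(x + y, b₁ + b₂) := by
          simp [Prod.ext_iff, sub_eq_add_neg]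
        rw [he]; exact h
      have hk : b - (b₁ + b₂) ∈ Kat Γ := AddSubgroup.subset_closure
        (Set.mem_iUnion.2 ⟨γ, Set.mem_iUnion.2 ⟨hγ, h2⟩⟩)
      have : b = b - (b₁ + b₂) + b₁ + b₂ := by abel
      rw [this]
      exact add_mem (add_mem hk (ihx _ hb₁)) (ihy _ hb₂)
    · intro x hx ihx b hxb
      obtain ⟨⟨hz, hadd, hn⟩, _, _⟩ := hend γ hγ
      have : (x, -b) ∈ γ := by simpa using hn _ hxb
      have := ihx _ this
      simpa using neg_mem this
  exact key a ha b hab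
end

section
/- Let A be an additive abelian group, Δ a prering of endogenies of A, and γ an endogeny of A commuting sharply with every δ ∈ Δ. Let B ≤ A be any fully Δ-invariant subgroup with Kat(Δ) ⊆ B and kat γ ⊆ B. Then the inverse image γ⁻¹[B] := {a ∈ A : γ[a] ⊆ B} is fully Δ-invariant: δ[γ⁻¹[B]] ⊆ γ⁻¹[B] for every δ ∈ Δ. -/
open Pointwise

variable {A : Type*} [AddCommGroup A]

/-- if `γ` commutes sharply with every element of a prering `Δ`
and `B` is a fully `Δ`-invariant subgroup containing `Kat(Δ)` and `kat γ`,
then `γ⁻¹[B]` is fully `Δ`-invariant. -/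
theorem preimage_fully_invariant (Δ : Set (Set (A × A))) (hΔ : IsPrering Δ)
    (γ : Set (A × A)) (hγ : IsEndogeny γ) (hc : ∀ δ ∈ Δ, SharpCommute γ δ)
    (B : AddSubgroup A) (hBinv : ∀ δ ∈ Δ, eimg δ (B : Set A) ⊆ (B : Set A))
    (hKat : (Kat Δ : Set A) ⊆ (B : Set A)) (hkatγ : kat γ ⊆ (B : Set A)) :
    ∀ δ ∈ Δ, eimg δ {a : A | fib γ a ⊆ (B : Set A)} ⊆
      {a : A | fib γ a ⊆ (B : Set A)} := by
  intro δ hδ b hb c hc'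
  obtain ⟨a, ha, hab⟩ := hb
  -- ha : fib γ a ⊆ B, hab : (a,b) ∈ δ, hc' : (b,c) ∈ γ
  obtain ⟨b', hb'⟩ := hγ.2.1 a
  obtain ⟨d, hd⟩ := ((hΔ.1 δ hδ).2.1 b')
  -- c - d ∈ eim (esub (ecomp γ δ) (ecomp δ γ))
  have hmem : c - d ∈ eim (esub (ecomp γ δ) (ecomp δ γ)) := by
    refine ⟨a, c, -d, ⟨b, hab, hc'⟩, ?_, (sub_eq_add_neg c d)⟩
    show (a, -(-d)) ∈ ecomp δ γ
    rw [neg_neg]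
    exact ⟨b', hb', hd⟩
  have hcd : c - d ∈ (B : Set A) := by
    have := hc δ hδ hmem
    obtain ⟨x, hx, y, hy, hxy⟩ := Set.mem_add.1 this
    have hyB : y ∈ (B : Set A) := by
      apply hKat
      exact AddSubgroup.subset_closure (Set.mem_biUnion hδ hy)
    rw [← hxy]
    exact B.add_mem (hkatγ hx) hyB
  have hdB : d ∈ (B : Set A) := hBinv δ hδ ⟨b', ha hb', hd⟩
  have : c = (c - d) + d := (sub_add_cancel c d).symm
  rw [Set.mem_setOf_eq] at *
  exact this ▸ B.add_mem hcd hdB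
end

section
/- Let K be an algebraically closed field of characteristic p > 0 and let γ := {(x^p − x, x) : x ∈ K}, the inverse relation of the Artin–Schreier endomorphism, viewed as an additive subgroup of K × K (under addition). Then γ is an endogeny of the additive group of K with kat γ = {x ∈ K : x^p = x} (the prime field 𝔽_p), but γ does not commute sharply with itself: im(γ ∘ γ − γ ∘ γ) is not contained in kat γ + kat γ. -/
/-!
The relation `γ` is the graph of the additive endomorphism `℘ x = x ^ p - x`
read backwards, so it is a subgroup of `K × K` whose katakernel is `ker ℘ = 𝔽_p`,
and it projects onto `K` because `℘` is surjective over an algebraically closed field.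
For such an inverse graph, `kat γ + kat γ = ker ℘` while `γ ∘ γ − γ ∘ γ` has image
containing `kat (γ ∘ γ) = ker ℘²`. A root `d` of `d ^ p - d = 1` lies in `ker ℘²`
(as `℘ 1 = 0`) but not in `ker ℘`.
-/

open Pointwise

variable {A : Type*} [AddCommGroup A]

section InverseGraph

def invGraph (f : A →+ A) : AddSubgroup (A × A) := (f.prod (AddMonoidHom.id A)).range

lemma mem_invGraph {f : A →+ A} {a b : A} : (a, b) ∈ invGraph f ↔ f b = a := by
  simp [invGraph, Prod.ext_iff]

lemma isAddSubgroupSet_coe (H : AddSubgroup (A × A)) : IsAddSubgroupSet (H : Set (A × A)) :=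
  ⟨H.zero_mem, fun _ hp _ hq => H.add_mem hp hq, fun _ hp => H.neg_mem hp⟩

lemma kat_invGraph (f : A →+ A) : kat (invGraph f : Set (A × A)) = f.ker := by
  ext b
  simp [kat, mem_invGraph]

lemma isEndogeny_invGraph {f : A →+ A} (hf : Function.Surjective f)
    (hker : (f.ker : Set A).Finite) : IsEndogeny (invGraph f : Set (A × A)) := by
  refine ⟨isAddSubgroupSet_coe _, fun a => ?_, kat_invGraph f ▸ hker⟩
  obtain ⟨b, hb⟩ := hf a
  exact ⟨b, mem_invGraph.mpr hb⟩

lemma kat_ecomp_invGraph (f g : A →+ A) :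
    kat (ecomp (invGraph f : Set (A × A)) (invGraph g)) = (g.comp f).ker := by
  ext c
  simp [kat, ecomp, mem_invGraph]

lemma kat_subset_eim_esub {γ δ : Set (A × A)} (hδ : ((0 : A), (0 : A)) ∈ δ) :
    kat γ ⊆ eim (esub γ δ) :=
  fun b hb => ⟨0, b, 0, hb, by simpa [eneg] using hδ, (add_zero b).symm⟩

lemma zero_mem_ecomp_invGraph (f g : A →+ A) :
    ((0 : A), (0 : A)) ∈ ecomp (invGraph f : Set (A × A)) (invGraph g) :=
  ⟨0, mem_invGraph.mpr (map_zero g), mem_invGraph.mpr (map_zero f)⟩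

lemma not_sharpCommute_invGraph_self {f : A →+ A} {d : A} (hffd : f (f d) = 0)
    (hfd : f d ≠ 0) : ¬ SharpCommute (invGraph f : Set (A × A)) (invGraph f) := by
  intro hsharp
  have hd : d ∈ kat (ecomp (invGraph f : Set (A × A)) (invGraph f)) := by
    rw [kat_ecomp_invGraph]
    exact hffd
  have hd_sum := hsharp (kat_subset_eim_esub (zero_mem_ecomp_invGraph f f) hd)
  rw [kat_invGraph, coe_add_coe] at hd_sum
  exact hfd hd_sum

end InverseGraph

section ArtinSchreier

variable (K : Type*) (p : ℕ) [Fact p.Prime]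

def artinSchreier [CommRing K] [CharP K p] : K →+ K :=
  (frobenius K p).toAddMonoidHom - AddMonoidHom.id K

variable {K p}

lemma artinSchreier_apply [CommRing K] [CharP K p] (x : K) :
    artinSchreier K p x = x ^ p - x := rfl

lemma coe_ker_artinSchreier [CommRing K] [CharP K p] :
    ((artinSchreier K p).ker : Set K) = {x | x ^ p = x} := by
  ext x
  simp [artinSchreier_apply, sub_eq_zero]

lemma finite_setOf_pow_char_eq_self [Field K] [CharP K p] : {x : K | x ^ p = x}.Finite := by
  let := Subfield.fintypeBot K p
  convert ((⊥ : Subfield K) : Set K).toFinite using 1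
  ext x
  exact (Subfield.mem_bot_iff_pow_eq_self K p).symm

open Polynomial in
lemma artinSchreier_surjective [Field K] [IsAlgClosed K] [CharP K p] :
    Function.Surjective (artinSchreier K p) := by
  intro a
  have hdeg : (X ^ p - X - C a : K[X]).natDegree = p := by
    rw [natDegree_sub_C, FiniteField.X_pow_card_sub_X_natDegree_eq K (Fact.out : p.Prime).one_lt]
  obtain ⟨x, hx⟩ := IsAlgClosed.exists_root (X ^ p - X - C a : K[X])
    (natDegree_pos_iff_degree_pos.mp (hdeg ▸ (Fact.out : p.Prime).pos)).ne'
  refine ⟨x, ?_⟩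
  simpa [artinSchreier_apply, sub_eq_zero] using hx

end ArtinSchreier

/-- over an algebraically closed field of characteristic `p > 0`,
the inverse relation of the Artin–Schreier endomorphism is an endogeny with
katakernel the prime field, but it does not commute sharply with itself. -/
theorem artin_schreier_inverse_not_sharp (K : Type*) [Field K] [IsAlgClosed K]
    (p : ℕ) [Fact p.Prime] [CharP K p] :
    IsEndogeny {q : K × K | ∃ x : K, q = (x ^ p - x, x)} ∧
    kat {q : K × K | ∃ x : K, q = (x ^ p - x, x)} = {x : K | x ^ p = x} ∧
    ¬ SharpCommute {q : K × K | ∃ x : K, q = (x ^ p - x, x)}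
        {q : K × K | ∃ x : K, q = (x ^ p - x, x)} := by
  have hγ : {q : K × K | ∃ x : K, q = (x ^ p - x, x)} = invGraph (artinSchreier K p) := by
    ext ⟨a, b⟩
    simp [mem_invGraph, artinSchreier_apply, Prod.ext_iff, eq_comm]
  obtain ⟨d, hd⟩ := artinSchreier_surjective (K := K) (p := p) 1
  rw [hγ, kat_invGraph, coe_ker_artinSchreier]
  refine ⟨isEndogeny_invGraph artinSchreier_surjective ?_, rfl, ?_⟩
  · exact coe_ker_artinSchreier (K := K) ▸ finite_setOf_pow_char_eq_self
  · refine not_sharpCommute_invGraph_self (d := d) ?_ (by simp [hd])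
    simp [hd, artinSchreier_apply]
end
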